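/- Let d be a natural number, n = floor(d/2), ε = (-1)^d. Define M^(γ)_d(i,k) = sum_j C(k, i-k-j)*C(d-2k, j)*2^j for 0 ≤ i ≤ d, 0 ≤ k ≤ n. With A_+(i,j) = C(j, i-j), A_-(i,j) = C(j+1, i-j) + C(j, i-j-1), and Γ(j,k) = 4^(k-j)*C(k,j), one has M^(γ)_d(i,k) = sum over j from 0 to n of A_ε(i,j) * Γ(n-j, n-k). -/

import Mathlib

/-- Binomial coefficient `C(n,k)` extended by `0` when `k < 0` or `k > n`. -/
def Cz (n k : ℤ) : ℤ := if 0 ≤ k ∧ k ≤ n then (n.toNat.choose k.toNat : ℤ) else 0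

/-- `A₊(i,j) = C(j, i-j)`. -/
def Ap (i j : ℤ) : ℚ := (Cz j (i - j) : ℚ)

/-- `A₋(i,j) = C(j+1, i-j) + C(j, i-j-1)`. -/
def Am (i j : ℤ) : ℚ := (Cz (j + 1) (i - j) : ℚ) + (Cz j (i - j - 1) : ℚ)

/-- `Γ(j,k) = 4^(k-j) C(k,j)` (automatically `0` for `j > k`). -/
def Gam (j k : ℤ) : ℚ := (4 : ℚ) ^ (k - j) * (Cz k j : ℚ)

/-!
Both sides are the coefficient of `x^i` in `(x(1+x))^k (1+2x)^(d-2k)`: the left side by expanding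
`(1+2x)^(d-2k)` binomially, the right side because `(1+2x)^2 = 1 + 4x(1+x)`, so that for
`d - 2k = 2(n-k) + (d mod 2)` one gets `(x(1+x))^k (1+2x)^(2(n-k)) = ∑_j Γ(n-j, n-k) (x(1+x))^j`,
while `x^i`-coefficients of `(x(1+x))^j` and `(x(1+x))^j (1+2x)` are `A₊(i,j)` and `A₋(i,j)`.
-/

open Polynomial Finset

lemma Cz_eq_zero_of_lt {n k : ℤ} (h : n < k) : Cz n k = 0 :=
  if_neg fun h' => h.not_ge h'.2

lemma Cz_natCast (n : ℕ) (k : ℤ) : Cz n k = if 0 ≤ k then (n.choose k.toNat : ℤ) else 0 := by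
  unfold Cz
  by_cases hk : 0 ≤ k
  · by_cases hkn : k ≤ n
    · simp [hk, hkn]
    · simp [hk, hkn, Nat.choose_eq_zero_of_lt (by omega : n < k.toNat)]
  · simp [hk]

lemma Cz_natCast_natCast (n k : ℕ) : Cz n k = n.choose k := by
  simp [Cz_natCast]

lemma Cz_natCast_sub (n k : ℕ) (h : k ≤ n) : Cz n ((n : ℤ) - k) = n.choose k := by
  rw [Cz_natCast, if_pos (by omega), ← Nat.choose_symm h]
  congr 2
  omega

lemma coeff_X_pow_mul_one_add_X_pow {R : Type*} [CommRing R] (a b i : ℕ) :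
    (X ^ a * (1 + X) ^ b : R[X]).coeff i = (Cz b ((i : ℤ) - a) : R) := by
  rw [coeff_X_pow_mul', Cz_natCast]
  split_ifs with h₁ h₂ h₂
  · rw [coeff_one_add_X_pow]
    push_cast
    congr 2
    omega
  · omega
  · omega
  · simp

lemma coeff_X_mul_one_add_X_pow (i j : ℕ) : ((X * (1 + X)) ^ j : ℚ[X]).coeff i = Ap i j := by
  rw [mul_pow, coeff_X_pow_mul_one_add_X_pow, Ap]

lemma coeff_X_mul_one_add_X_pow_mul_one_add_two_X (i j : ℕ) :
    ((X * (1 + X)) ^ j * (1 + 2 * X) : ℚ[X]).coeff i = Am i j := by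
  have h : ((X * (1 + X)) ^ j * (1 + 2 * X) : ℚ[X])
      = X ^ j * (1 + X) ^ (j + 1) + X ^ (j + 1) * (1 + X) ^ j := by rw [mul_pow]; ring
  rw [h, coeff_add, coeff_X_pow_mul_one_add_X_pow, coeff_X_pow_mul_one_add_X_pow, Am]
  push_cast
  ring_nf

lemma one_add_two_X_pow {R : Type*} [CommSemiring R] (N : ℕ) :
    (1 + 2 * X : R[X]) ^ N = ∑ j ∈ range (N + 1), C (2 ^ j * N.choose j : R) * X ^ j := by
  rw [add_comm, add_pow]
  refine sum_congr rfl fun j _ => ?_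
  rw [mul_pow, one_pow, mul_one, C_mul, C_pow]
  simp only [map_natCast, map_ofNat]
  ring

lemma coeff_X_mul_one_add_X_pow_mul_one_add_two_X_pow (k N D i : ℕ) (hN : N ≤ D) :
    ((X * (1 + X)) ^ k * (1 + 2 * X) ^ N : ℚ[X]).coeff i
      = ∑ j ∈ range (D + 1), (Cz k ((i : ℤ) - k - j) : ℚ) * (Cz N j : ℚ) * 2 ^ j := by
  calc ((X * (1 + X)) ^ k * (1 + 2 * X) ^ N : ℚ[X]).coeff i
      = ∑ j ∈ range (N + 1), (Cz k ((i : ℤ) - k - j) : ℚ) * (Cz N j : ℚ) * 2 ^ j := by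
        rw [one_add_two_X_pow, mul_sum, finsetSum_coeff]
        refine sum_congr rfl fun j _ => ?_
        have h : (X * (1 + X)) ^ k * X ^ j = (X ^ (k + j) * (1 + X) ^ k : ℚ[X]) := by
          rw [mul_pow, pow_add]; ring
        rw [mul_left_comm, coeff_C_mul, h, coeff_X_pow_mul_one_add_X_pow, Cz_natCast_natCast]
        push_cast
        ring_nf
    _ = _ := by
        refine sum_subset (range_subset_range.2 (by omega)) fun j _ hj => ?_
        rw [Cz_natCast_natCast, Nat.choose_eq_zero_of_lt (by simpa using hj)]
        simp

lemma Gam_eq_zero_of_lt {j k : ℤ} (h : k < j) : Gam j k = 0 := by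
  simp [Gam, Cz_eq_zero_of_lt h]

lemma Gam_natCast_sub (m t : ℕ) (h : t ≤ m) : Gam ((m : ℤ) - t) m = 4 ^ t * m.choose t := by
  rw [Gam, Cz_natCast_sub m t h, sub_sub_cancel, zpow_natCast, Int.cast_natCast]

lemma X_mul_one_add_X_pow_mul_one_add_two_X_pow_eq_sum (n k : ℕ) (hk : k ≤ n) :
    ((X * (1 + X)) ^ k * (1 + 2 * X) ^ (2 * (n - k)) : ℚ[X])
      = ∑ j ∈ range (n + 1), C (Gam ((n : ℤ) - j) ((n : ℤ) - k)) * (X * (1 + X)) ^ j := by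
  obtain ⟨m, rfl⟩ : ∃ m, n = k + m := ⟨n - k, by omega⟩
  have hsq : (1 + 2 * X : ℚ[X]) ^ 2 = 4 * (X * (1 + X)) + 1 := by ring
  calc ((X * (1 + X)) ^ k * (1 + 2 * X) ^ (2 * (k + m - k)) : ℚ[X])
      = ∑ t ∈ range (m + 1), C (Gam ((m : ℤ) - t) m) * (X * (1 + X)) ^ (k + t) := by
        rw [Nat.add_sub_cancel_left, pow_mul, hsq, add_pow, mul_sum]
        refine sum_congr rfl fun t ht => ?_
        rw [Gam_natCast_sub m t (by simpa [Nat.lt_succ_iff] using ht), pow_add]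
        simp only [one_pow, mul_pow, C_mul, C_pow, map_natCast, map_ofNat]
        ring
    _ = _ := by
        rw [show k + m + 1 = k + (m + 1) by omega, sum_range_add _ k (m + 1),
          sum_eq_zero (s := range k) fun j hj => by
            rw [Gam_eq_zero_of_lt (by simp at hj; omega), C_0, zero_mul], zero_add]
        refine sum_congr rfl fun t _ => ?_
        congr 3 <;> push_cast <;> ring

theorem decomposition_Mgamma_general (d : ℕ) (n : ℕ) (hn : n = d / 2) (i k : ℕ)
    (hk : k ≤ n) :
    (∑ j ∈ Finset.range (d + 1),
        (Cz (k : ℤ) ((i : ℤ) - k - j) : ℚ) * (Cz ((d : ℤ) - 2 * k) (j : ℤ) : ℚ) * 2 ^ j)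
      = ∑ j ∈ Finset.range (n + 1),
          if Even d then Ap i j * Gam ((n : ℤ) - j) ((n : ℤ) - k)
          else Am i j * Gam ((n : ℤ) - j) ((n : ℤ) - k) := by
  rw [show (d : ℤ) - 2 * k = ((d - 2 * k : ℕ) : ℤ) by omega,
    ← coeff_X_mul_one_add_X_pow_mul_one_add_two_X_pow k (d - 2 * k) d i (by omega)]
  rcases Nat.even_or_odd d with hd | hd
  · have hN : d - 2 * k = 2 * (n - k) := by have := Nat.even_iff.mp hd; omega
    rw [hN, X_mul_one_add_X_pow_mul_one_add_two_X_pow_eq_sum n k hk, finsetSum_coeff]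
    refine sum_congr rfl fun j _ => ?_
    rw [if_pos hd, coeff_C_mul, coeff_X_mul_one_add_X_pow, mul_comm]
  · have hN : d - 2 * k = 2 * (n - k) + 1 := by have := Nat.odd_iff.mp hd; omega
    rw [hN, pow_succ, ← mul_assoc, X_mul_one_add_X_pow_mul_one_add_two_X_pow_eq_sum n k hk,
      sum_mul, finsetSum_coeff]
    refine sum_congr rfl fun j _ => ?_
    rw [if_neg (Nat.not_even_iff_odd.mpr hd), mul_assoc, coeff_C_mul,
      coeff_X_mul_one_add_X_pow_mul_one_add_two_X, mul_comm]

theorem decomposition_Mgamma (d : ℕ) (n : ℕ) (hn : n = d / 2) (i k : ℕ)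
    (hi : i ≤ d) (hk : k ≤ n) :
    (∑ j ∈ Finset.range (d + 1),
        (Cz (k : ℤ) ((i : ℤ) - k - j) : ℚ) * (Cz ((d : ℤ) - 2 * k) (j : ℤ) : ℚ) * 2 ^ j)
      = ∑ j ∈ Finset.range (n + 1),
          if Even d then Ap i j * Gam ((n : ℤ) - j) ((n : ℤ) - k)
          else Am i j * Gam ((n : ℤ) - j) ((n : ℤ) - k) :=
  decomposition_Mgamma_general d n hn i k hk
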